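/- arXiv:1005.3142 — 2 statements merged into one kernel-verified Lean document; each statement's English description precedes it below -/
import Mathlib

section
/- Under the hypotheses of the coupled fixed point existence theorem (complete partially ordered metric space, F continuous with mixed monotone property, the rational contraction condition with α+β<1, and x₀ ≤ F(x₀,y₀), y₀ ≥ F(y₀,x₀)), assume additionally that for every pair of points (x,y), (x*,y*) ∈ X×X there exists (z₁,z₂) ∈ X×X comparable (in the product order: (u,v) ≤ (x,y) iff u ≤ x and v ≥ y) to both (x,y) and (x*,y*). Then the coupled fixed point of F is unique. -/
/-!
Iterate `G(x, y) = (F(x, y), F(y, x))` from `(x₀, y₀)`. By mixed monotonicity the orbit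
increases in the product order, so the contraction applies to consecutive points; there the two
factors of the rational term cancel and it is bounded by the next step, whence steps shrink by the
factor `β / (1 - α) < 1` and the limit is a coupled fixed point. At a coupled fixed point the
rational term vanishes, so `G` moves every comparable point closer by the factor `β`, and
comparability is preserved. The iterates of a point comparable to two coupled fixed points thus
converge to both.
-/

open Filter Topology

/-- Mixed monotone property: `x ↦ F x y` nondecreasing, `y ↦ F x y` nonincreasing. -/
def MixedMonotone {X : Type*} [PartialOrder X] (F : X → X → X) : Prop :=
  (∀ y, Monotone fun x => F x y) ∧ (∀ x, Antitone fun y => F x y)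

/-- The rational expression `M((x,y),(u,v))` from the paper. -/
noncomputable def Mexpr {X : Type*} [MetricSpace X] (F : X → X → X) (x y u v : X) : ℝ :=
  min (dist x (F x y) * (2 + dist u (F u v) + dist v (F v u)) / (2 + dist x u + dist y v))
      (dist u (F u v) * (2 + dist x (F x y) + dist y (F y x)) / (2 + dist x u + dist y v))

/-- Product order used in the paper: `(u,v) ≤ (x,y)` iff `u ≤ x` and `y ≤ v`. -/
def ProdLe {X : Type*} [PartialOrder X] (p q : X × X) : Prop :=
  p.1 ≤ q.1 ∧ q.2 ≤ p.2

open Function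

section CoupledFixedPoint

variable {X : Type*}

def coupledMap (F : X → X → X) (p : X × X) : X × X := (F p.1 p.2, F p.2 p.1)

theorem isFixedPt_coupledMap_iff {F : X → X → X} {p : X × X} :
    IsFixedPt (coupledMap F) p ↔ F p.1 p.2 = p.1 ∧ F p.2 p.1 = p.2 :=
  Prod.ext_iff

theorem continuous_coupledMap [TopologicalSpace X] {F : X → X → X}
    (hF : Continuous fun p : X × X => F p.1 p.2) : Continuous (coupledMap F) :=
  hF.prodMk (hF.comp continuous_swap)

namespace MixedMonotone

variable [PartialOrder X] {F : X → X → X}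

theorem prodLe_coupledMap (hF : MixedMonotone F) {p q : X × X} (h : ProdLe p q) :
    ProdLe (coupledMap F p) (coupledMap F q) :=
  ⟨(hF.1 p.2 h.1).trans (hF.2 q.1 h.2), (hF.1 q.1 h.2).trans (hF.2 p.2 h.1)⟩

theorem prodLe_iterate (hF : MixedMonotone F) (n : ℕ) {p q : X × X} (h : ProdLe p q) :
    ProdLe ((coupledMap F)^[n] p) ((coupledMap F)^[n] q) := by
  induction n with
  | zero => exact h
  | succ n ih =>
    rw [iterate_succ_apply', iterate_succ_apply']
    exact hF.prodLe_coupledMap ih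

theorem comparable_iterate (hF : MixedMonotone F) {r w : X × X}
    (hr : IsFixedPt (coupledMap F) r) (hw : ProdLe w r ∨ ProdLe r w) (n : ℕ) :
    ProdLe ((coupledMap F)^[n] w) r ∨ ProdLe r ((coupledMap F)^[n] w) := by
  rw [← (hr.iterate n).eq]
  exact hw.imp (hF.prodLe_iterate n) (hF.prodLe_iterate n)

end MixedMonotone

section Metric

variable [MetricSpace X] {F : X → X → X}

def sumDist (p q : X × X) : ℝ := dist p.1 q.1 + dist p.2 q.2

theorem dist_le_sumDist (p q : X × X) : dist p q ≤ sumDist p q := by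
  rw [Prod.dist_eq]
  exact max_le_add_of_nonneg dist_nonneg dist_nonneg

theorem Mexpr_nonpos_of_eq {x y u v : X} (h : F x y = x ∨ F u v = u) : Mexpr F x y u v ≤ 0 := by
  rcases h with h | h
  · exact (min_le_left _ _).trans (by rw [h, dist_self, zero_mul, zero_div])
  · exact (min_le_right _ _).trans (by rw [h, dist_self, zero_mul, zero_div])

theorem Mexpr_le_of_eq_left {x y u v : X} (hx : x = F u v) (hy : y = F v u) :
    Mexpr F x y u v ≤ dist x (F x y) := by
  refine (min_le_left _ _).trans_eq ?_
  rw [← hx, ← hy, dist_comm u, dist_comm v, mul_div_assoc, div_self (by positivity), mul_one]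

theorem Mexpr_le_of_eq_right {x y u v : X} (hu : u = F x y) (hv : v = F y x) :
    Mexpr F x y u v ≤ dist u (F u v) := by
  refine (min_le_right _ _).trans_eq ?_
  rw [← hu, ← hv, mul_div_assoc, div_self (by positivity), mul_one]

section Order

variable [PartialOrder X] {α β : ℝ}

def IsRationalContraction (F : X → X → X) (α β : ℝ) : Prop :=
  ∀ x y u v : X, u ≤ x → y ≤ v →
    dist (F x y) (F u v) ≤ α * Mexpr F x y u v + β / 2 * (dist x u + dist y v)

namespace IsRationalContraction

variable (hF : IsRationalContraction F α β) (hα : 0 ≤ α)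
include hF hα

theorem dist_le_of_eq {x y u v : X} (hx : F x y = x)
    (h : u ≤ x ∧ y ≤ v ∨ x ≤ u ∧ v ≤ y) :
    dist x (F u v) ≤ β / 2 * (dist x u + dist y v) := by
  rcases h with ⟨hu, hv⟩ | ⟨hu, hv⟩
  · calc dist x (F u v) = dist (F x y) (F u v) := by rw [hx]
      _ ≤ α * Mexpr F x y u v + β / 2 * (dist x u + dist y v) := hF x y u v hu hv
      _ ≤ β / 2 * (dist x u + dist y v) := by
        have hM : Mexpr F x y u v ≤ 0 := Mexpr_nonpos_of_eq (.inl hx)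
        linarith [mul_nonpos_of_nonneg_of_nonpos hα hM]
  · calc dist x (F u v) = dist (F u v) (F x y) := by rw [hx, dist_comm]
      _ ≤ α * Mexpr F u v x y + β / 2 * (dist u x + dist v y) := hF u v x y hu hv
      _ ≤ β / 2 * (dist x u + dist y v) := by
        rw [dist_comm u, dist_comm v]
        have hM : Mexpr F u v x y ≤ 0 := Mexpr_nonpos_of_eq (.inr hx)
        linarith [mul_nonpos_of_nonneg_of_nonpos hα hM]

theorem sumDist_coupledMap_le {r v : X × X} (hr : IsFixedPt (coupledMap F) r)
    (hv : ProdLe v r ∨ ProdLe r v) : sumDist r (coupledMap F v) ≤ β * sumDist r v := by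
  obtain ⟨hr₁, hr₂⟩ := isFixedPt_coupledMap_iff.1 hr
  have h₁ := hF.dist_le_of_eq hα hr₁ hv
  have h₂ := hF.dist_le_of_eq hα hr₂ <| hv.symm.imp (fun h ↦ ⟨h.2, h.1⟩) fun h ↦ ⟨h.2, h.1⟩
  simp only [sumDist, coupledMap]
  linarith

theorem sumDist_coupledMap_succ_le (hα₁ : α < 1) {w : X × X} (hw : ProdLe w (coupledMap F w)) :
    sumDist (coupledMap F w) (coupledMap F (coupledMap F w)) ≤
      β / (1 - α) * sumDist w (coupledMap F w) := by
  obtain ⟨a, b⟩ := w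
  obtain ⟨hab, hba⟩ := hw
  have h₁ := hF (F a b) (F b a) a b hab hba
  have h₂ := hF b a (F b a) (F a b) hba hab
  have hM₁ : Mexpr F (F a b) (F b a) a b ≤ dist (F a b) (F (F a b) (F b a)) :=
    Mexpr_le_of_eq_left rfl rfl
  have hM₂ : Mexpr F b a (F b a) (F a b) ≤ dist (F b a) (F (F b a) (F a b)) :=
    Mexpr_le_of_eq_right rfl rfl
  rw [dist_comm (F (F a b) (F b a)), dist_comm (F a b) a, dist_comm (F b a) b] at h₁
  simp only [sumDist, coupledMap]
  rw [div_mul_eq_mul_div, le_div_iff₀ (by linarith)]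
  linarith [mul_le_mul_of_nonneg_left hM₁ hα, mul_le_mul_of_nonneg_left hM₂ hα]

theorem sumDist_iterate_succ_le (hmm : MixedMonotone F) (hα₁ : α < 1) (hβ : 0 ≤ β)
    {w : X × X} (hw : ProdLe w (coupledMap F w)) (n : ℕ) :
    sumDist ((coupledMap F)^[n] w) ((coupledMap F)^[n + 1] w) ≤
      sumDist w (coupledMap F w) * (β / (1 - α)) ^ n := by
  induction n with
  | zero => simp
  | succ n ih =>
    have hstep := hF.sumDist_coupledMap_succ_le hα hα₁ (w := (coupledMap F)^[n] w)
      (by rw [← iterate_succ_apply' (coupledMap F)]; exact hmm.prodLe_iterate n hw)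
    rw [← iterate_succ_apply' (coupledMap F), ← iterate_succ_apply' (coupledMap F)] at hstep
    calc _ ≤ β / (1 - α) * sumDist ((coupledMap F)^[n] w) ((coupledMap F)^[n + 1] w) := hstep
      _ ≤ β / (1 - α) * (sumDist w (coupledMap F w) * (β / (1 - α)) ^ n) :=
          mul_le_mul_of_nonneg_left ih (div_nonneg hβ (by linarith))
      _ = sumDist w (coupledMap F w) * (β / (1 - α)) ^ (n + 1) := by ring

theorem exists_isFixedPt [CompleteSpace X] (hmm : MixedMonotone F)
    (hc : Continuous (coupledMap F)) (hβ : 0 ≤ β) (hαβ : α + β < 1) {w : X × X}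
    (hw : ProdLe w (coupledMap F w)) : ∃ r, IsFixedPt (coupledMap F) r := by
  have hq : β / (1 - α) < 1 := (div_lt_one (by linarith)).2 (by linarith)
  have hC : CauchySeq fun n => (coupledMap F)^[n] w :=
    cauchySeq_of_le_geometric _ _ hq fun n =>
      (dist_le_sumDist _ _).trans (hF.sumDist_iterate_succ_le hα hmm (by linarith) hβ hw n)
  obtain ⟨r, hr⟩ := cauchySeq_tendsto_of_complete hC
  exact ⟨r, isFixedPt_of_tendsto_iterate hr hc.continuousAt⟩

theorem sumDist_iterate_le (hmm : MixedMonotone F) (hβ : 0 ≤ β) {r w : X × X}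
    (hr : IsFixedPt (coupledMap F) r) (hw : ProdLe w r ∨ ProdLe r w) (n : ℕ) :
    sumDist r ((coupledMap F)^[n] w) ≤ β ^ n * sumDist r w := by
  induction n with
  | zero => simp
  | succ n ih =>
    rw [iterate_succ_apply', pow_succ', mul_assoc]
    exact (hF.sumDist_coupledMap_le hα hr (hmm.comparable_iterate hr hw n)).trans
      (mul_le_mul_of_nonneg_left ih hβ)

theorem tendsto_iterate (hmm : MixedMonotone F) (hβ : 0 ≤ β) (hβ₁ : β < 1) {r w : X × X}
    (hr : IsFixedPt (coupledMap F) r) (hw : ProdLe w r ∨ ProdLe r w) :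
    Tendsto (fun n => (coupledMap F)^[n] w) atTop (𝓝 r) := by
  have hlim : Tendsto (fun n => β ^ n * sumDist r w) atTop (𝓝 0) := by
    simpa using (tendsto_pow_atTop_nhds_zero_of_lt_one hβ hβ₁).mul_const (sumDist r w)
  refine tendsto_iff_dist_tendsto_zero.2 (squeeze_zero (fun _ => dist_nonneg) (fun n => ?_) hlim)
  rw [dist_comm]
  exact (dist_le_sumDist _ _).trans (hF.sumDist_iterate_le hα hmm hβ hr hw n)

theorem eq_of_isFixedPt (hmm : MixedMonotone F) (hβ : 0 ≤ β) (hβ₁ : β < 1) {r s z : X × X}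
    (hr : IsFixedPt (coupledMap F) r) (hs : IsFixedPt (coupledMap F) s)
    (hzr : ProdLe z r ∨ ProdLe r z) (hzs : ProdLe z s ∨ ProdLe s z) : r = s :=
  tendsto_nhds_unique (hF.tendsto_iterate hα hmm hβ hβ₁ hr hzr)
    (hF.tendsto_iterate hα hmm hβ hβ₁ hs hzs)

end IsRationalContraction

end Order

end Metric

end CoupledFixedPoint

theorem coupled_fixed_point_unique
    {X : Type*} [MetricSpace X] [PartialOrder X] [CompleteSpace X]
    (F : X → X → X) (hFc : Continuous fun p : X × X => F p.1 p.2)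
    (hmm : MixedMonotone F) (α β : ℝ) (hα : 0 < α) (hβ : 0 < β) (hαβ : α + β < 1)
    (hcontr : ∀ x y u v : X, u ≤ x → y ≤ v →
      dist (F x y) (F u v) ≤ α * Mexpr F x y u v + β / 2 * (dist x u + dist y v))
    (x₀ y₀ : X) (hx₀ : x₀ ≤ F x₀ y₀) (hy₀ : F y₀ x₀ ≤ y₀)
    (hcomp : ∀ p q : X × X, ∃ z : X × X,
      (ProdLe z p ∨ ProdLe p z) ∧ (ProdLe z q ∨ ProdLe q z)) :
    ∃! p : X × X, F p.1 p.2 = p.1 ∧ F p.2 p.1 = p.2 := by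
  have hF : IsRationalContraction F α β := hcontr
  obtain ⟨r, hr⟩ := hF.exists_isFixedPt hα.le hmm (continuous_coupledMap hFc) hβ.le hαβ
    (w := (x₀, y₀)) ⟨hx₀, hy₀⟩
  refine ⟨r, isFixedPt_coupledMap_iff.1 hr, fun q hq => ?_⟩
  obtain ⟨z, hzq, hzr⟩ := hcomp q r
  exact hF.eq_of_isFixedPt hα.le hmm hβ.le (by linarith) (isFixedPt_coupledMap_iff.2 hq) hr
    hzq hzr
end

section
/- Let (X,d,≤) be a complete partially ordered metric space and F: X×X → X be continuous with mixed monotone property satisfying the rational contraction with α,β>0, α+β<1, and suppose x₀ ≤ F(x₀,y₀), y₀ ≥ F(y₀,x₀). Let (x,y) be the coupled fixed point obtained as the limit of the iterates. If y₀ ≤ x₀ (instead of x₀ ≤ y₀), then also x = y. -/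
open Filter Topology

/-!
Mixed monotonicity propagates `yₙ ≤ xₙ` along the iterates, so the contraction may be applied
to `(xₙ, yₙ)` and `(yₙ, xₙ)`: `d(xₙ₊₁, yₙ₊₁) ≤ α Mₙ + β d(xₙ, yₙ)`. Every factor `d(xₙ, F(xₙ, yₙ))`
in `Mₙ` is `d(xₙ, xₙ₊₁) → 0` while its denominator stays `≥ 2`, so `Mₙ → 0`, and in the limit
`d(x, y) ≤ β d(x, y)` with `β < 1`.
-/

section MixedMonotone

variable {X : Type*} [PartialOrder X] {F : X → X → X}

theorem MixedMonotone.apply_swap_le (hmm : MixedMonotone F) {a b : X} (h : b ≤ a) :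
    F b a ≤ F a b :=
  (hmm.2 b h).trans (hmm.1 b h)

theorem MixedMonotone.coupled_iterate_le (hmm : MixedMonotone F) {xs ys : ℕ → X}
    (hxs : ∀ n, xs (n + 1) = F (xs n) (ys n)) (hys : ∀ n, ys (n + 1) = F (ys n) (xs n))
    (h0 : ys 0 ≤ xs 0) (n : ℕ) : ys n ≤ xs n := by
  induction n with
  | zero => exact h0
  | succ n ih => rw [hxs, hys]; exact hmm.apply_swap_le ih

end MixedMonotone

section Mexpr

variable {X : Type*} [MetricSpace X] (F : X → X → X)

theorem Mexpr_nonneg (x y u v : X) : 0 ≤ Mexpr F x y u v :=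
  le_min (by positivity) (by positivity)

theorem Mexpr_le (x y u v : X) :
    Mexpr F x y u v ≤ dist x (F x y) * (2 + dist u (F u v) + dist v (F v u)) / 2 :=
  (min_le_left _ _).trans <| div_le_div_of_nonneg_left (by positivity) two_pos <|
    le_add_of_le_of_nonneg (le_add_of_nonneg_right dist_nonneg) dist_nonneg

theorem tendsto_Mexpr_zero {ι : Type*} {l : Filter ι} {x y u v : ι → X}
    (hx : Tendsto (fun n => dist (x n) (F (x n) (y n))) l (𝓝 0))
    (hu : Tendsto (fun n => dist (u n) (F (u n) (v n))) l (𝓝 0))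
    (hv : Tendsto (fun n => dist (v n) (F (v n) (u n))) l (𝓝 0)) :
    Tendsto (fun n => Mexpr F (x n) (y n) (u n) (v n)) l (𝓝 0) := by
  have hbound : Tendsto (fun n => dist (x n) (F (x n) (y n)) *
      (2 + dist (u n) (F (u n) (v n)) + dist (v n) (F (v n) (u n))) / 2) l (𝓝 0) := by
    simpa using ((hx.mul ((tendsto_const_nhds (x := (2 : ℝ))).add hu |>.add hv)).div_const 2)
  exact tendsto_of_tendsto_of_tendsto_of_le_of_le tendsto_const_nhds hbound
    (fun n => Mexpr_nonneg F _ _ _ _) (fun n => Mexpr_le F _ _ _ _)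

end Mexpr

theorem Filter.Tendsto.dist_succ_self_zero {X : Type*} [PseudoMetricSpace X] {xs : ℕ → X} {x : X}
    (h : Tendsto xs atTop (𝓝 x)) : Tendsto (fun n => dist (xs n) (xs (n + 1))) atTop (𝓝 0) := by
  simpa using h.dist (h.comp (tendsto_add_atTop_nat 1))

theorem eq_of_tendsto_of_dist_succ_le {X : Type*} [MetricSpace X] {xs ys : ℕ → X} {x y : X}
    (hx : Tendsto xs atTop (𝓝 x)) (hy : Tendsto ys atTop (𝓝 y)) {ε : ℕ → ℝ}
    (hε : Tendsto ε atTop (𝓝 0)) {β : ℝ} (hβ : β < 1)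
    (hstep : ∀ n, dist (xs (n + 1)) (ys (n + 1)) ≤ ε n + β * dist (xs n) (ys n)) : x = y := by
  have hd := hx.dist hy
  have hlim : dist x y ≤ 0 + β * dist x y :=
    le_of_tendsto_of_tendsto' (hd.comp (tendsto_add_atTop_nat 1)) (hε.add (hd.const_mul β)) hstep
  exact dist_le_zero.mp (by nlinarith [dist_nonneg (x := x) (y := y)])

theorem coupled_fixed_point_eq_components'_general
    {X : Type*} [MetricSpace X] [PartialOrder X]
    (F : X → X → X)
    (hmm : MixedMonotone F) (α β : ℝ) (hα : 0 < α) (hαβ : α + β < 1)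
    (hcontr : ∀ x y u v : X, u ≤ x → y ≤ v →
      dist (F x y) (F u v) ≤ α * Mexpr F x y u v + β / 2 * (dist x u + dist y v))
    (xs ys : ℕ → X)
    (hxs : ∀ n, xs (n + 1) = F (xs n) (ys n)) (hys : ∀ n, ys (n + 1) = F (ys n) (xs n))
    (x y : X) (hxlim : Tendsto xs atTop (𝓝 x)) (hylim : Tendsto ys atTop (𝓝 y))
    (h10 : ys 0 ≤ xs 0) :
    x = y := by
  have hle := hmm.coupled_iterate_le hxs hys h10
  have hdx : Tendsto (fun n => dist (xs n) (F (xs n) (ys n))) atTop (𝓝 0) := by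
    simpa only [hxs] using hxlim.dist_succ_self_zero
  have hdy : Tendsto (fun n => dist (ys n) (F (ys n) (xs n))) atTop (𝓝 0) := by
    simpa only [hys] using hylim.dist_succ_self_zero
  have hM := tendsto_Mexpr_zero F hdx hdy hdx
  refine eq_of_tendsto_of_dist_succ_le hxlim hylim (by simpa using hM.const_mul α)
    (by linarith) fun n => ?_
  have h := hcontr (xs n) (ys n) (ys n) (xs n) (hle n) (hle n)
  rw [← hxs, ← hys, dist_comm (ys n)] at h
  linarith

theorem coupled_fixed_point_eq_components'
    {X : Type*} [MetricSpace X] [PartialOrder X] [CompleteSpace X]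
    (F : X → X → X) (hFc : Continuous fun p : X × X => F p.1 p.2)
    (hmm : MixedMonotone F) (α β : ℝ) (hα : 0 < α) (hβ : 0 < β) (hαβ : α + β < 1)
    (hcontr : ∀ x y u v : X, u ≤ x → y ≤ v →
      dist (F x y) (F u v) ≤ α * Mexpr F x y u v + β / 2 * (dist x u + dist y v))
    (xs ys : ℕ → X) (hx₀ : xs 0 ≤ F (xs 0) (ys 0)) (hy₀ : F (ys 0) (xs 0) ≤ ys 0)
    (hxs : ∀ n, xs (n + 1) = F (xs n) (ys n)) (hys : ∀ n, ys (n + 1) = F (ys n) (xs n))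
    (x y : X) (hxlim : Tendsto xs atTop (𝓝 x)) (hylim : Tendsto ys atTop (𝓝 y))
    (hfx : F x y = x) (hfy : F y x = y)
    (h10 : ys 0 ≤ xs 0) :
    x = y :=
  coupled_fixed_point_eq_components'_general F hmm α β hα hαβ hcontr xs ys hxs hys x y hxlim hylim
    h10
end
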